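/- For each fixed β ∈ (0,1) and each positive rational q, there exists a unique value Â₁ ∈ (0, 1/(1+β)) such that q·T₁(β,Â₁) = T₂(β,Â₁). -/

import Mathlib

open Real Filter Topology

/-- The complete elliptic integral of the first kind,
`K(κ) = ∫₀¹ dv / √((1 - v²)(1 - κ² v²))`. -/
noncomputable def K (κ : ℝ) : ℝ :=
  ∫ v in (0:ℝ)..1, 1 / Real.sqrt ((1 - v ^ 2) * (1 - κ ^ 2 * v ^ 2))

/-- The modulus `κ₁(β, A₁)`, defined by
`κ₁² = (A₁(1-β) + √(1-4βA₁²)) / (2√(1-4βA₁²))`. -/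
noncomputable def κ₁ (β A₁ : ℝ) : ℝ :=
  Real.sqrt ((A₁ * (1 - β) + Real.sqrt (1 - 4 * β * A₁ ^ 2)) /
    (2 * Real.sqrt (1 - 4 * β * A₁ ^ 2)))

/-- The modulus `κ₂(β)`, defined by `κ₂² = β/(1+β)`. -/
noncomputable def κ₂ (β : ℝ) : ℝ := Real.sqrt (β / (1 + β))

/-- The period `T₁(β,A₁) = 2√(2/a) (1-4βA₁²)^{-1/4} K(κ₁(β,A₁))` of the ξ-motion. -/
noncomputable def T₁ (a β A₁ : ℝ) : ℝ :=
  2 * Real.sqrt (2 / a) / (1 - 4 * β * A₁ ^ 2) ^ ((1:ℝ)/4) * K (κ₁ β A₁)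

/-- The period `T₂(β,A₁) = 2/√(a A₁ (1+β)) · K(κ₂(β))` of the φ-motion. -/
noncomputable def T₂ (a β A₁ : ℝ) : ℝ :=
  2 / Real.sqrt (a * A₁ * (1 + β)) * K (κ₂ β)

/-!
Since `T₂(β, A₁) = T₂(β, 1) / √A₁`, the equation `q T₁ = T₂` reads `T₁(β, A₁) √A₁ = T₂(β, 1) / q`.
On `[0, 1/(1+β))` the left-hand side is continuous, vanishes at `0` and is strictly increasing
(`A₁ ↦ κ₁(β, A₁)` and `K` are increasing, `1 - 4βA₁²` decreases). As `A₁ → 1/(1+β)` we have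
`κ₁ → 1`, and `K(κ) ≥ -log(1 - κ)/2` forces `T₁ → ∞`. The intermediate value theorem gives the
unique solution.
-/

open MeasureTheory Set intervalIntegral
open scoped Interval

theorem StrictMonoOn.existsUnique_eq_of_tendsto_atTop {α δ : Type*}
    [ConditionallyCompleteLinearOrder α] [TopologicalSpace α] [OrderTopology α] [DenselyOrdered α]
    [LinearOrder δ] [TopologicalSpace δ] [OrderClosedTopology δ]
    {f : α → δ} {a b : α} {y : δ} (hf : StrictMonoOn f (Ico a b)) (hab : a < b)
    (hcont : ContinuousOn f (Ico a b)) (hb : Tendsto f (𝓝[<] b) atTop) (hy : f a < y) :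
    ∃! x, x ∈ Ioo a b ∧ f x = y := by
  have := nhdsLT_neBot_of_exists_lt ⟨a, hab⟩
  obtain ⟨s, hys, hs⟩ := ((hb.eventually (eventually_ge_atTop y)).and (Ioo_mem_nhdsLT hab)).exists
  obtain ⟨x, hx, hfx⟩ := intermediate_value_Icc hs.1.le
    (hcont.mono (Icc_subset_Ico_right hs.2)) ⟨hy.le, hys⟩
  have hxa : a < x := hx.1.lt_of_ne (by rintro rfl; exact hy.ne hfx)
  have hxI : x ∈ Ioo a b := ⟨hxa, hx.2.trans_lt hs.2⟩
  exact ⟨x, ⟨hxI, hfx⟩, fun x' hx' =>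
    hf.injOn (Ioo_subset_Ico_self hx'.1) (Ioo_subset_Ico_self hxI) (hx'.2.trans hfx.symm)⟩

noncomputable def kIntegrand (κ v : ℝ) : ℝ := 1 / √((1 - v ^ 2) * (1 - κ ^ 2 * v ^ 2))

lemma measurable_kIntegrand (κ : ℝ) : Measurable (kIntegrand κ) := by
  unfold kIntegrand
  fun_prop

lemma kIntegrand_nonneg (κ v : ℝ) : 0 ≤ kIntegrand κ v := by
  unfold kIntegrand
  positivity

lemma kIntegrand_radicand_pos {κ v : ℝ} (hκ : κ ^ 2 ≤ 1) (hv : v ∈ Ioo (0:ℝ) 1) :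
    0 < (1 - v ^ 2) * (1 - κ ^ 2 * v ^ 2) := by
  obtain ⟨hv0, hv1⟩ := hv
  have hv2 : v ^ 2 < 1 := by nlinarith
  exact mul_pos (by linarith) (by nlinarith)

lemma ae_mem_Ioo_of_mem_uIoc {a b : ℝ} (hab : a ≤ b) : ∀ᵐ v : ℝ, v ∈ Ι a b → v ∈ Ioo a b := by
  filter_upwards [Ioo_ae_eq_Ioc (μ := volume) (a := a) (b := b)] with v hv hmem
  rw [uIoc_of_le hab] at hmem
  exact hv.mpr hmem

/-- From `(1 - v²)(1 - κ²v²) ≥ (1 - v)(1 - m)`: an integrable bound, uniform in `κ² ≤ m`. -/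
lemma kIntegrand_le {κ m v : ℝ} (hκ : κ ^ 2 ≤ m) (hm : m < 1) (hv : v ∈ Ico (0:ℝ) 1) :
    kIntegrand κ v ≤ (√(1 - m))⁻¹ * (1 - v) ^ (-(1 / 2) : ℝ) := by
  obtain ⟨hv0, hv1⟩ := hv
  have hle : (1 - v) * (1 - m) ≤ (1 - v ^ 2) * (1 - κ ^ 2 * v ^ 2) := by
    have h1 : 1 - v ≤ 1 - v ^ 2 := by nlinarith
    have h2 : 1 - m ≤ 1 - κ ^ 2 * v ^ 2 := by
      nlinarith [mul_le_mul_of_nonneg_left hκ (sq_nonneg v)]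
    exact mul_le_mul h1 h2 (by linarith) (by nlinarith)
  calc kIntegrand κ v ≤ 1 / √((1 - v) * (1 - m)) :=
        one_div_le_one_div_of_le (sqrt_pos.2 (mul_pos (by linarith) (by linarith)))
          (sqrt_le_sqrt hle)
    _ = _ := by
        rw [sqrt_mul (by linarith), rpow_neg (by linarith), ← sqrt_eq_rpow, one_div, mul_inv,
          mul_comm]

lemma intervalIntegrable_const_mul_one_sub_rpow_neg_half (c : ℝ) :
    IntervalIntegrable (fun v : ℝ => c * (1 - v) ^ (-(1 / 2) : ℝ)) volume 0 1 := by
  apply IntervalIntegrable.const_mul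
  have := (intervalIntegrable_rpow' (a := 0) (b := 1) (r := -(1 / 2)) (by norm_num)).comp_sub_left 1
  simpa using this.symm

lemma intervalIntegrable_kIntegrand {κ : ℝ} (hκ : κ ∈ Ioo (-1) 1) :
    IntervalIntegrable (kIntegrand κ) volume 0 1 := by
  refine (intervalIntegrable_const_mul_one_sub_rpow_neg_half (√(1 - κ ^ 2))⁻¹).mono_fun'
    (measurable_kIntegrand κ).aestronglyMeasurable ((ae_restrict_iff' measurableSet_uIoc).2 ?_)
  filter_upwards [ae_mem_Ioo_of_mem_uIoc zero_le_one] with v hv hmem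
  rw [norm_of_nonneg (kIntegrand_nonneg κ v)]
  exact kIntegrand_le le_rfl ((sq_lt_one_iff_abs_lt_one κ).2 (abs_lt.2 hκ))
    (Ioo_subset_Ico_self (hv hmem))

lemma K_pos {κ : ℝ} (hκ : κ ∈ Ioo (-1) 1) : 0 < K κ :=
  intervalIntegral_pos_of_pos_on (intervalIntegrable_kIntegrand hκ)
    (fun _ hv => one_div_pos.2 (sqrt_pos.2 (kIntegrand_radicand_pos
      ((sq_lt_one_iff_abs_lt_one κ).2 (abs_lt.2 hκ)).le hv))) one_pos

lemma monotoneOn_K : MonotoneOn K (Ico 0 1) := by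
  intro κ hκ κ' hκ' hle
  refine integral_mono_on_of_le_Ioo zero_le_one
    (intervalIntegrable_kIntegrand (Ico_subset_Ioo_left neg_one_lt_zero hκ))
    (intervalIntegrable_kIntegrand (Ico_subset_Ioo_left neg_one_lt_zero hκ')) fun v hv => ?_
  have hpos := kIntegrand_radicand_pos (pow_le_one₀ hκ'.1 hκ'.2.le) hv
  have hsq : κ ^ 2 * v ^ 2 ≤ κ' ^ 2 * v ^ 2 := by
    have := hκ.1
    gcongr
  have hv2 : 0 ≤ 1 - v ^ 2 := by nlinarith [hv.1, hv.2]
  exact one_div_le_one_div_of_le (sqrt_pos.2 hpos) (sqrt_le_sqrt (by nlinarith))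

lemma continuousOn_K : ContinuousOn K (Ioo (-1) 1) := by
  intro κ₀ hκ₀
  obtain ⟨m, hκm, hm⟩ := exists_between ((sq_lt_one_iff_abs_lt_one κ₀).2 (abs_lt.2 hκ₀))
  refine (continuousAt_of_dominated_interval
    (F := kIntegrand) (bound := fun v => (√(1 - m))⁻¹ * (1 - v) ^ (-(1 / 2) : ℝ))
    (Eventually.of_forall fun κ => (measurable_kIntegrand κ).aestronglyMeasurable) ?_
    (intervalIntegrable_const_mul_one_sub_rpow_neg_half _) ?_).continuousWithinAt
  · filter_upwards [(continuous_pow 2).continuousAt.eventually (gt_mem_nhds hκm)] with κ hκ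
    filter_upwards [ae_mem_Ioo_of_mem_uIoc zero_le_one] with v hv hmem
    rw [norm_of_nonneg (kIntegrand_nonneg κ v)]
    exact kIntegrand_le hκ.le hm (Ioo_subset_Ico_self (hv hmem))
  · filter_upwards [ae_mem_Ioo_of_mem_uIoc zero_le_one] with v hv hmem
    have hpos := kIntegrand_radicand_pos (hκm.trans hm).le (hv hmem)
    unfold kIntegrand
    exact continuousAt_const.div (by fun_prop) (sqrt_pos.2 hpos).ne'

lemma inv_two_mul_one_sub_le_kIntegrand {κ v : ℝ} (h0 : 0 ≤ κ) (h1 : κ ≤ 1)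
    (hv : v ∈ Ioo (0:ℝ) 1) : (2 * (1 - κ * v))⁻¹ ≤ kIntegrand κ v := by
  have hpos := kIntegrand_radicand_pos (pow_le_one₀ h0 h1) hv
  obtain ⟨hv0, hv1⟩ := hv
  have hκv : 1 - v ≤ 1 - κ * v := by nlinarith
  -- `(1 - v²)(1 - κ²v²) = (1 - v)(1 + v)(1 - κv)(1 + κv) ≤ (1 - κv)·2·(1 - κv)·2`
  have hsq : √((1 - v ^ 2) * (1 - κ ^ 2 * v ^ 2)) ≤ 2 * (1 - κ * v) := by
    refine sqrt_le_iff.2 ⟨by nlinarith, ?_⟩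
    have h2 : (1 + v) * (1 + κ * v) ≤ 4 := by nlinarith
    calc (1 - v ^ 2) * (1 - κ ^ 2 * v ^ 2)
        = ((1 - v) * (1 - κ * v)) * ((1 + v) * (1 + κ * v)) := by ring
      _ ≤ (1 - κ * v) ^ 2 * 4 := by
          gcongr
          rw [sq]
          exact mul_le_mul_of_nonneg_right hκv (by nlinarith)
      _ = (2 * (1 - κ * v)) ^ 2 := by ring
  rw [← one_div]
  exact one_div_le_one_div_of_le (sqrt_pos.2 hpos) hsq

lemma neg_log_one_sub_div_two_le_K {κ : ℝ} (h0 : 0 ≤ κ) (h1 : κ < 1) :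
    -log (1 - κ) / 2 ≤ K κ := by
  have hpos : ∀ v ∈ uIcc (0:ℝ) 1, 0 < 1 - κ * v := fun v hv => by
    rw [uIcc_of_le zero_le_one] at hv
    nlinarith [hv.1, hv.2]
  have hderiv : ∀ v ∈ uIcc (0:ℝ) 1,
      HasDerivAt (fun v => -log (1 - κ * v) / 2) (κ / (2 * (1 - κ * v))) v := fun v hv => by
    refine ((((hasDerivAt_id' v).const_mul κ).const_sub 1).log (hpos v hv).ne').fun_neg.div_const
      2 |>.congr_deriv ?_
    field_simp
  have hint : IntervalIntegrable (fun v => κ / (2 * (1 - κ * v))) volume 0 1 :=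
    ContinuousOn.intervalIntegrable (continuousOn_const.div (by fun_prop)
      fun v hv => by linarith [hpos v hv])
  calc -log (1 - κ) / 2 = ∫ v in (0:ℝ)..1, κ / (2 * (1 - κ * v)) := by
        rw [integral_eq_sub_of_hasDerivAt hderiv hint]; simp
    _ ≤ K κ := by
        refine integral_mono_on_of_le_Ioo zero_le_one hint
          (intervalIntegrable_kIntegrand ⟨by linarith, h1⟩) fun v hv => ?_
        have := hpos v (by rw [uIcc_of_le zero_le_one]; exact Ioo_subset_Icc_self hv)
        calc κ / (2 * (1 - κ * v)) ≤ (2 * (1 - κ * v))⁻¹ := by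
              rw [div_eq_mul_inv]; exact mul_le_of_le_one_left (by positivity) h1.le
          _ ≤ kIntegrand κ v := inv_two_mul_one_sub_le_kIntegrand h0 h1.le hv

lemma tendsto_K_nhdsLT_one : Tendsto K (𝓝[<] 1) atTop := by
  have hsub : Tendsto (fun κ : ℝ => 1 - κ) (𝓝[<] 1) (𝓝[>] 0) :=
    tendsto_nhdsWithin_of_tendsto_nhds_of_eventually_within _
      (((continuous_sub_left (1:ℝ)).tendsto' 1 0 (sub_self 1)).mono_left nhdsWithin_le_nhds)
      (by filter_upwards [self_mem_nhdsWithin] with κ hκ; simpa using hκ)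
  have hlog : Tendsto (fun κ : ℝ => -log (1 - κ) / 2) (𝓝[<] 1) atTop :=
    (tendsto_neg_atBot_atTop.comp (tendsto_log_nhdsGT_zero.comp hsub)).atTop_div_const two_pos
  refine tendsto_atTop_mono' _ ?_ hlog
  filter_upwards [Ioo_mem_nhdsLT zero_lt_one] with κ hκ
  exact neg_log_one_sub_div_two_le_K hκ.1.le hκ.2

noncomputable def κ₁Sq (β A₁ : ℝ) : ℝ :=
  (A₁ * (1 - β) + √(1 - 4 * β * A₁ ^ 2)) / (2 * √(1 - 4 * β * A₁ ^ 2))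

lemma κ₁_eq_sqrt_κ₁Sq (β A₁ : ℝ) : κ₁ β A₁ = √(κ₁Sq β A₁) := rfl

section Moduli

variable {β A : ℝ}

lemma continuousAt_κ₁ (hA : 0 < 1 - 4 * β * A ^ 2) : ContinuousAt (κ₁ β) A := by
  have hr := sqrt_pos.2 hA
  refine continuous_sqrt.continuousAt.comp (ContinuousAt.div (by fun_prop) (by fun_prop) ?_)
  positivity

variable (hβ0 : 0 ≤ β) (hβ1 : β < 1)
include hβ0 hβ1

lemma one_sub_four_mul_sq_pos (hA : A ∈ Icc 0 (1 / (1 + β))) : 0 < 1 - 4 * β * A ^ 2 := by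
  obtain ⟨hA0, hAL⟩ := hA
  have hx : A * (1 + β) ≤ 1 := (le_div_iff₀ (by linarith)).1 hAL
  have hx2 : (A * (1 + β)) ^ 2 ≤ 1 := pow_le_one₀ (by positivity) hx
  -- `4β(A(1 + β))² ≤ 4β < (1 + β)²`
  have : 4 * β * A ^ 2 * (1 + β) ^ 2 < 1 * (1 + β) ^ 2 := by
    nlinarith [mul_le_mul_of_nonneg_left hx2 (by linarith : 0 ≤ 4 * β),
      sq_pos_of_pos (sub_pos.2 hβ1)]
  linarith [lt_of_mul_lt_mul_right this (sq_nonneg _)]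

lemma κ₁Sq_lt_one (hA : A ∈ Ico 0 (1 / (1 + β))) : κ₁Sq β A < 1 := by
  obtain ⟨hA0, hAL⟩ := hA
  have hr := sqrt_pos.2 (one_sub_four_mul_sq_pos hβ0 hβ1 ⟨hA0, hAL.le⟩)
  have hx : A * (1 + β) < 1 := (lt_div_iff₀ (by linarith)).1 hAL
  -- `A²(1 - β)² < 1 - 4βA²` is `(A(1 + β))² < 1`
  have : A * (1 - β) < √(1 - 4 * β * A ^ 2) :=
    (lt_sqrt (mul_nonneg hA0 (by linarith))).2
      (by nlinarith [mul_nonneg hA0 (by linarith : 0 ≤ 1 + β)])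
  rw [κ₁Sq, div_lt_one (by positivity)]
  linarith

lemma κ₁Sq_one_div_one_add : κ₁Sq β (1 / (1 + β)) = 1 := by
  have hr : 0 < (1 - β) / (1 + β) := div_pos (by linarith) (by linarith)
  have : 1 - 4 * β * (1 / (1 + β)) ^ 2 = ((1 - β) / (1 + β)) ^ 2 := by
    field_simp
    ring
  rw [κ₁Sq, this, sqrt_sq hr.le, show 1 / (1 + β) * (1 - β) = (1 - β) / (1 + β) by ring,
    div_eq_one_iff_eq (by positivity)]
  ring

lemma monotoneOn_κ₁Sq : MonotoneOn (κ₁Sq β) (Icc 0 (1 / (1 + β))) := by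
  intro A hA A' hA' hle
  have hr := sqrt_pos.2 (one_sub_four_mul_sq_pos hβ0 hβ1 hA)
  have hr' := sqrt_pos.2 (one_sub_four_mul_sq_pos hβ0 hβ1 hA')
  have hA0 := hA.1
  have hrr : √(1 - 4 * β * A' ^ 2) ≤ √(1 - 4 * β * A ^ 2) := by gcongr
  have hsplit (x r : ℝ) (hr : 0 < r) :
      (x * (1 - β) + r) / (2 * r) = (1 - β) / 2 * (x / r) + 1 / 2 := by
    field_simp
  simp only [κ₁Sq, hsplit _ _ hr, hsplit _ _ hr']
  have : A / √(1 - 4 * β * A ^ 2) ≤ A' / √(1 - 4 * β * A' ^ 2) := by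
    have := hA'.1
    gcongr
  gcongr

lemma κ₁_mem_Ico (hA : A ∈ Ico 0 (1 / (1 + β))) : κ₁ β A ∈ Ico 0 1 :=
  ⟨sqrt_nonneg _, by rw [κ₁_eq_sqrt_κ₁Sq, sqrt_lt' one_pos, one_pow]; exact κ₁Sq_lt_one hβ0 hβ1 hA⟩

lemma monotoneOn_κ₁ : MonotoneOn (κ₁ β) (Icc 0 (1 / (1 + β))) :=
  fun _ hA _ hA' hle => sqrt_le_sqrt (monotoneOn_κ₁Sq hβ0 hβ1 hA hA' hle)

lemma continuousOn_κ₁ : ContinuousOn (κ₁ β) (Icc 0 (1 / (1 + β))) :=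
  fun _ hA => (continuousAt_κ₁ (one_sub_four_mul_sq_pos hβ0 hβ1 hA)).continuousWithinAt

lemma tendsto_κ₁_nhdsLT : Tendsto (κ₁ β) (𝓝[<] (1 / (1 + β))) (𝓝[<] 1) := by
  have hL : (0:ℝ) < 1 / (1 + β) := one_div_pos.2 (by linarith)
  have hcont := continuousAt_κ₁ (one_sub_four_mul_sq_pos hβ0 hβ1 ⟨hL.le, le_rfl⟩)
  rw [ContinuousAt, κ₁_eq_sqrt_κ₁Sq, κ₁Sq_one_div_one_add hβ0 hβ1, sqrt_one] at hcont
  refine tendsto_nhdsWithin_of_tendsto_nhds_of_eventually_within _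
    (hcont.mono_left nhdsWithin_le_nhds) ?_
  filter_upwards [Ioo_mem_nhdsLT hL] with A hA
  exact (κ₁_mem_Ico hβ0 hβ1 (Ioo_subset_Ico_self hA)).2

lemma K_κ₁_pos (hA : A ∈ Ico 0 (1 / (1 + β))) : 0 < K (κ₁ β A) :=
  K_pos (Ico_subset_Ioo_left neg_one_lt_zero (κ₁_mem_Ico hβ0 hβ1 hA))

end Moduli

section Periods

variable {a β A : ℝ}

lemma T₂_eq_div_sqrt (hA : 0 ≤ A) : T₂ a β A = T₂ a β 1 / √A := by
  rw [T₂, T₂, mul_one, show a * A * (1 + β) = a * (1 + β) * A by ring, sqrt_mul' _ hA]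
  ring

lemma T₂_pos (ha : 0 < a) (hβ : -1 < β) : 0 < T₂ a β 1 := by
  have hκ₂ : κ₂ β ∈ Ioo (-1) 1 := by
    refine ⟨neg_one_lt_zero.trans_le (sqrt_nonneg _), ?_⟩
    rw [κ₂, sqrt_lt' one_pos, one_pow]
    exact (div_lt_one (by linarith)).2 (by linarith)
  rw [T₂, mul_one]
  exact mul_pos (div_pos two_pos (sqrt_pos.2 (mul_pos ha (by linarith)))) (K_pos hκ₂)

variable (hβ0 : 0 ≤ β) (hβ1 : β < 1)
include hβ0 hβ1

lemma continuousOn_T₁ : ContinuousOn (T₁ a β) (Ico 0 (1 / (1 + β))) := by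
  intro A hA
  have hs := one_sub_four_mul_sq_pos hβ0 hβ1 (Ico_subset_Icc_self hA)
  have hmaps : MapsTo (κ₁ β) (Ico 0 (1 / (1 + β))) (Ioo (-1) 1) := fun _ hA =>
    Ico_subset_Ioo_left neg_one_lt_zero (κ₁_mem_Ico hβ0 hβ1 hA)
  have hK := continuousOn_K.comp ((continuousOn_κ₁ hβ0 hβ1).mono Ico_subset_Icc_self) hmaps A hA
  have hp : ContinuousAt (fun A => (1 - 4 * β * A ^ 2) ^ ((1:ℝ) / 4)) A :=
    ContinuousAt.rpow_const (by fun_prop) (Or.inl hs.ne')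
  exact (continuousWithinAt_const.div hp.continuousWithinAt (rpow_pos_of_pos hs _).ne').mul hK

lemma T₁_pos (ha : 0 < a) (hA : A ∈ Ico 0 (1 / (1 + β))) : 0 < T₁ a β A := by
  have := K_κ₁_pos hβ0 hβ1 hA
  have := rpow_pos_of_pos (one_sub_four_mul_sq_pos hβ0 hβ1 (Ico_subset_Icc_self hA)) (1 / 4)
  rw [T₁]
  positivity

lemma monotoneOn_T₁ : MonotoneOn (T₁ a β) (Ico 0 (1 / (1 + β))) := by
  intro A hA A' hA' hle
  have hK : K (κ₁ β A) ≤ K (κ₁ β A') := monotoneOn_K (κ₁_mem_Ico hβ0 hβ1 hA)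
    (κ₁_mem_Ico hβ0 hβ1 hA') (monotoneOn_κ₁ hβ0 hβ1 (Ico_subset_Icc_self hA)
      (Ico_subset_Icc_self hA') hle)
  have hs' := one_sub_four_mul_sq_pos hβ0 hβ1 (Ico_subset_Icc_self hA')
  have := K_κ₁_pos hβ0 hβ1 hA
  have := rpow_pos_of_pos hs' (1 / 4)
  have := hA.1
  rw [T₁, T₁]
  gcongr

lemma tendsto_T₁_nhdsLT (ha : 0 < a) : Tendsto (T₁ a β) (𝓝[<] (1 / (1 + β))) atTop := by
  have hK : Tendsto (fun A => 2 * √(2 / a) * K (κ₁ β A)) (𝓝[<] (1 / (1 + β))) atTop :=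
    (tendsto_K_nhdsLT_one.comp (tendsto_κ₁_nhdsLT hβ0 hβ1)).const_mul_atTop (by positivity)
  refine tendsto_atTop_mono' _ ?_ hK
  filter_upwards [Ioo_mem_nhdsLT (one_div_pos.2 (by linarith : (0:ℝ) < 1 + β))] with A hA
  have hs := one_sub_four_mul_sq_pos hβ0 hβ1 (Ioo_subset_Icc_self hA)
  have hp : (1 - 4 * β * A ^ 2) ^ ((1:ℝ) / 4) ≤ 1 := rpow_le_one hs.le (by nlinarith) (by norm_num)
  have := K_κ₁_pos hβ0 hβ1 (Ioo_subset_Ico_self hA)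
  rw [T₁]
  gcongr
  exact le_div_self (by positivity) (rpow_pos_of_pos hs _) hp

lemma strictMonoOn_T₁_mul_sqrt (ha : 0 < a) :
    StrictMonoOn (fun A => T₁ a β A * √A) (Ico 0 (1 / (1 + β))) :=
  fun _ hA _ hA' hlt => mul_lt_mul' (monotoneOn_T₁ hβ0 hβ1 hA hA' hlt.le)
    (sqrt_lt_sqrt hA.1 hlt) (sqrt_nonneg _) (T₁_pos hβ0 hβ1 ha hA')

end Periods

/-- For each `β ∈ (0,1)` and each positive rational `q` there is a unique
`Â₁ ∈ (0, 1/(1+β))` with `q T₁(β,Â₁) = T₂(β,Â₁)`. -/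
theorem existsUnique_A₁ (a : ℝ) (ha : 0 < a) (β : ℝ) (hβ : β ∈ Set.Ioo (0:ℝ) 1)
    (q : ℚ) (hq : 0 < q) :
    ∃! A₁ : ℝ, A₁ ∈ Set.Ioo 0 (1 / (1 + β)) ∧ (q : ℝ) * T₁ a β A₁ = T₂ a β A₁ := by
  obtain ⟨hβ0, hβ1⟩ := hβ
  have hq' : (0:ℝ) < q := by exact_mod_cast hq
  have hL : (0:ℝ) < 1 / (1 + β) := one_div_pos.2 (by linarith)
  have hroot := (strictMonoOn_T₁_mul_sqrt hβ0.le hβ1 ha).existsUnique_eq_of_tendsto_atTop hL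
    ((continuousOn_T₁ hβ0.le hβ1).mul continuous_sqrt.continuousOn)
    ((tendsto_T₁_nhdsLT hβ0.le hβ1 ha).atTop_mul_pos (sqrt_pos.2 hL)
      (continuous_sqrt.tendsto _ |>.mono_left nhdsWithin_le_nhds))
    (show T₁ a β 0 * √0 < T₂ a β 1 / q by simpa using div_pos (T₂_pos ha (by linarith)) hq')
  refine (existsUnique_congr fun A => and_congr_right fun hA => ?_).2 hroot
  have hsA : 0 < √A := sqrt_pos.2 hA.1
  rw [T₂_eq_div_sqrt hA.1.le, eq_div_iff hsA.ne', eq_div_iff hq'.ne']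
  ring_nf
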